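/- Let n ≥ 2 and let G be a tree (a connected acyclic simple graph) on Fin n, with distance matrix D given by D i j = dist_G(i, j). Then D is invertible and the sum of all entries of its inverse satisfies 1ᵀ·D⁻¹·1 = 2/(n − 1); in particular 1ᵀ·D⁻¹·1 > 0. -/

import Mathlib

/-!
Graham–Lovász: with `L` the Laplacian of the tree and `τ u = 2 - deg u`,
`D⁻¹ = -L/2 + ττᵀ/(2(n-1))`. Seen from a vertex `v ≠ u`, exactly one neighbour of `u` is
closer to `v` and all others are farther, which gives `L D = τ 1ᵀ - 2 I`. Moreover `D τ` is the
constant vector `n - 1`. Summing the entries of the inverse, `L` contributes nothing (its rows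
sum to zero) and `∑ τ = 2n - 2(n-1) = 2`.
-/

open Matrix Finset

namespace SimpleGraph

variable {V : Type*}

noncomputable def distMatrix (R : Type*) [NatCast R] (G : SimpleGraph V) : Matrix V V R :=
  of fun u v => (G.dist u v : R)

variable {G : SimpleGraph V}

lemma isSymm_distMatrix {R : Type*} [NatCast R] : (G.distMatrix R).IsSymm :=
  IsSymm.ext fun _ _ => by simp [distMatrix, dist_comm]

lemma Connected.exists_adj_dist_eq_add_one (hG : G.Connected) {u v : V} (huv : u ≠ v) :
    ∃ w, G.Adj u w ∧ G.dist u v = G.dist w v + 1 := by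
  obtain ⟨p, hp⟩ := hG.exists_walk_length_eq_dist u v
  cases p with
  | nil => exact absurd rfl huv
  | @cons _ w _ hadj q =>
    refine ⟨w, hadj, ?_⟩
    have hle : G.dist w v ≤ q.length := dist_le q
    have htri : G.dist u v ≤ G.dist u w + G.dist w v := hG.dist_triangle
    rw [dist_eq_one_iff_adj.2 hadj] at htri
    rw [Walk.length_cons] at hp
    omega

lemma IsTree.existsUnique_adj_dist_eq_add_one (hG : G.IsTree) {u v : V} (huv : u ≠ v) :
    ∃! w, G.Adj u w ∧ G.dist u v = G.dist w v + 1 := by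
  obtain ⟨w, hw⟩ := hG.connected.exists_adj_dist_eq_add_one huv
  refine ⟨w, hw, fun w' hw' => ?_⟩
  have geodesic {x} (h : G.Adj u x ∧ G.dist u v = G.dist x v + 1) :
      ∃ p : G.Walk u v, p.IsPath ∧ p.getVert 1 = x := by
    obtain ⟨q, hq⟩ := hG.connected.exists_walk_length_eq_dist x v
    exact ⟨.cons h.1 q, Walk.isPath_of_length_eq_dist _ (by simp [hq, h.2]), by simp⟩
  obtain ⟨p, hp, rfl⟩ := geodesic hw
  obtain ⟨p', hp', rfl⟩ := geodesic hw'
  rw [(hG.existsUnique_path u v).unique hp' hp]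

section CommRing

variable [Fintype V] [DecidableRel G.Adj] {R : Type*} [CommRing R]

lemma IsTree.sum_neighborFinset_dist_sub_dist (hG : G.IsTree) {u v : V} (huv : u ≠ v) :
    ∑ w ∈ G.neighborFinset u, ((G.dist u v : R) - G.dist w v) = 2 - G.degree u := by
  classical
  obtain ⟨w₀, ⟨hadj₀, hd₀⟩, huniq⟩ := hG.existsUnique_adj_dist_eq_add_one huv
  have hw₀ : w₀ ∈ G.neighborFinset u := (mem_neighborFinset G u w₀).2 hadj₀
  have hfarther : ∀ w ∈ (G.neighborFinset u).erase w₀, (G.dist u v : R) - G.dist w v = -1 := by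
    intro w hw
    obtain ⟨hne, hadj⟩ := mem_erase.1 hw
    rw [mem_neighborFinset] at hadj
    have hstep := hG.dist_eq_dist_add_one_of_adj v hadj
    rw [dist_comm (u := v), dist_comm (u := v)] at hstep
    have : G.dist w v = G.dist u v + 1 := hstep.resolve_left fun h => hne (huniq w ⟨hadj, h⟩)
    rw [this]; push_cast; ring
  rw [← add_sum_erase _ _ hw₀, sum_congr rfl hfarther, sum_const, card_erase_of_mem hw₀,
    card_neighborFinset_eq_degree, hd₀, nsmul_eq_mul,
    Nat.cast_pred (G.degree_pos_iff_exists_adj u |>.2 ⟨w₀, hadj₀⟩)]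
  push_cast; ring

lemma IsTree.sum_degree (hG : G.IsTree) :
    ∑ u, (G.degree u : R) = 2 * (Fintype.card V - 1) := by
  classical
  rw [← Nat.cast_sum, sum_degrees_eq_twice_card_edges, ← hG.card_edgeFinset]
  push_cast; ring

lemma IsTree.sum_two_sub_degree (hG : G.IsTree) : ∑ u, (2 - G.degree u : R) = 2 := by
  rw [sum_sub_distrib, hG.sum_degree, sum_const, card_univ, nsmul_eq_mul]; ring

variable [DecidableEq V]

lemma lapMatrix_mulVec_apply_eq_sum (x : V → R) (u : V) :
    (G.lapMatrix R *ᵥ x) u = ∑ w ∈ G.neighborFinset u, (x u - x w) := by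
  rw [lapMatrix_mulVec_apply, sum_sub_distrib, sum_const, card_neighborFinset_eq_degree,
    nsmul_eq_mul]

lemma IsTree.lapMatrix_mul_distMatrix (hG : G.IsTree) :
    G.lapMatrix R * G.distMatrix R = vecMulVec (fun u => 2 - (G.degree u : R)) 1 - 2 := by
  ext u v
  change (G.lapMatrix R *ᵥ fun w => (G.dist w v : R)) u = _
  rw [lapMatrix_mulVec_apply_eq_sum]
  rcases eq_or_ne u v with rfl | huv
  · have hadj : ∀ w ∈ G.neighborFinset u, (G.dist u u : R) - G.dist w u = -1 := fun w hw => by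
      rw [dist_self, dist_eq_one_iff_adj.2 ((mem_neighborFinset G u w).1 hw).symm]; simp
    rw [sum_congr rfl hadj]
    simp [ofNat_apply]
  · rw [hG.sum_neighborFinset_dist_sub_dist huv]
    simp [ofNat_apply, huv]

end CommRing

variable [Fintype V] [DecidableRel G.Adj] [DecidableEq V] {K : Type*} [Field K] [CharZero K]

/-- With `x = dist u ·`, the `u`-th entry of `D τ` is the Laplacian quadratic form `xᵀ L x`,
to which every edge contributes `(±1)²`. -/
lemma IsTree.distMatrix_mulVec_two_sub_degree (hG : G.IsTree) :
    G.distMatrix K *ᵥ (fun w => 2 - (G.degree w : K)) = fun _ => (Fintype.card V - 1 : K) := by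
  ext u
  set x : V → K := fun w => G.dist u w
  have hLx : ∀ w, (G.lapMatrix K *ᵥ x) w = 2 - G.degree w - 2 * if w = u then 1 else 0 := by
    intro w
    have := congrFun₂ (hG.lapMatrix_mul_distMatrix (R := K)) w u
    rw [mul_apply] at this
    simpa [distMatrix, dist_comm, ofNat_apply, mulVec, dotProduct, x] using this
  have hedge : ∀ i j, G.Adj i j → (x i - x j) ^ 2 = 1 := by
    intro i j hadj
    rcases hG.dist_eq_dist_add_one_of_adj u hadj with h | h <;>
      simp only [x, h] <;> push_cast <;> ring
  calc (G.distMatrix K *ᵥ fun w => 2 - (G.degree w : K)) u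
      = x ⬝ᵥ (G.lapMatrix K *ᵥ x) := by
        simp only [dotProduct, hLx, mul_sub, sum_sub_distrib]
        simp [mulVec, dotProduct, distMatrix, x, mul_sub]
    _ = toLinearMap₂' K (G.lapMatrix K) x x := (toLinearMap₂'_apply' _ _ _).symm
    _ = (∑ i, ∑ j, if G.Adj i j then (x i - x j) ^ 2 else 0) / 2 := lapMatrix_toLinearMap₂' ..
    _ = (∑ i, (G.degree i : K)) / 2 := by
        simp_rw [degree_eq_sum_if_adj]
        congr 1
        refine sum_congr rfl fun i _ => sum_congr rfl fun j _ => ?_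
        split_ifs with h
        · exact hedge i j h
        · rfl
    _ = Fintype.card V - 1 := by rw [hG.sum_degree]; ring

lemma IsTree.mul_distMatrix_eq_one (hG : G.IsTree) (hV : 1 < Fintype.card V) :
    (-(1 / 2 : K) • G.lapMatrix K + (2 * (Fintype.card V - 1 : K))⁻¹ •
      vecMulVec (fun u => 2 - (G.degree u : K)) (fun u => 2 - (G.degree u : K))) *
        G.distMatrix K = 1 := by
  have hτD : (fun u => 2 - (G.degree u : K)) ᵥ* G.distMatrix K =
      fun _ => (Fintype.card V - 1 : K) := by
    rw [← isSymm_distMatrix.eq, vecMul_transpose, hG.distMatrix_mulVec_two_sub_degree]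
  have hV' : (Fintype.card V - 1 : K) ≠ 0 := by
    rw [sub_ne_zero]; exact_mod_cast hV.ne'
  rw [add_mul, smul_mul, smul_mul, hG.lapMatrix_mul_distMatrix, vecMulVec_mul, hτD]
  ext u v
  simp only [vecMulVec_one, Matrix.add_apply, Matrix.smul_apply,
    Matrix.sub_apply, replicateCol_apply, ofNat_apply, one_apply, vecMulVec_apply, smul_eq_mul,
    Nat.cast_ite, Nat.cast_ofNat, Nat.cast_zero]
  field_simp
  split_ifs <;> ring

lemma IsTree.isUnit_distMatrix (hG : G.IsTree) (hV : 1 < Fintype.card V) :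
    IsUnit (G.distMatrix K) :=
  (isUnit_iff_isUnit_det _).2 (isUnit_det_of_left_inverse (hG.mul_distMatrix_eq_one hV))

lemma IsTree.inv_distMatrix (hG : G.IsTree) (hV : 1 < Fintype.card V) :
    (G.distMatrix K)⁻¹ = -(1 / 2 : K) • G.lapMatrix K + (2 * (Fintype.card V - 1 : K))⁻¹ •
      vecMulVec (fun u => 2 - (G.degree u : K)) (fun u => 2 - (G.degree u : K)) :=
  inv_eq_left_inv (hG.mul_distMatrix_eq_one hV)

lemma IsTree.sum_inv_distMatrix (hG : G.IsTree) (hV : 1 < Fintype.card V) :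
    ∑ u, ∑ v, (G.distMatrix K)⁻¹ u v = 2 / (Fintype.card V - 1) := by
  have hL : ∀ u, ∑ v, G.lapMatrix K u v = 0 := fun u => by
    simpa [mulVec, dotProduct] using congrFun (G.lapMatrix_mulVec_const_eq_zero (R := K)) u
  simp only [hG.inv_distMatrix hV, Matrix.add_apply, Matrix.smul_apply, vecMulVec_apply,
    sum_add_distrib, ← mul_sum, hL, ← sum_mul, hG.sum_two_sub_degree, smul_eq_mul]
  rw [sum_const_zero, mul_inv]
  ring

end SimpleGraph

/-- The distance matrix `D` of a tree on `n ≥ 2` vertices is invertible and the sum of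
all entries of `D⁻¹` equals `2/(n − 1)`; in particular it is positive. -/
theorem tree_distance_matrix_inverse_sum {n : ℕ} (hn : 2 ≤ n)
    (G : SimpleGraph (Fin n)) (hT : G.IsTree)
    (D : Matrix (Fin n) (Fin n) ℝ) (hD : ∀ i j, D i j = (G.dist i j : ℝ)) :
    IsUnit D ∧ (∑ i, ∑ j, D⁻¹ i j = 2 / ((n : ℝ) - 1)) ∧ 0 < ∑ i, ∑ j, D⁻¹ i j := by
  classical
  obtain rfl : D = G.distMatrix ℝ := Matrix.ext hD
  have hV : 1 < Fintype.card (Fin n) := by rw [Fintype.card_fin]; omega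
  have hsum := hT.sum_inv_distMatrix (K := ℝ) hV
  rw [Fintype.card_fin] at hsum
  have hn' : (2 : ℝ) ≤ n := by exact_mod_cast hn
  exact ⟨hT.isUnit_distMatrix hV, hsum, hsum ▸ div_pos two_pos (by linarith)⟩
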